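/- A connected graph with n vertices and feedback edge set number k (i.e., with exactly n - 1 + k edges) contains at most 2^k · C(n,2) distinct paths (as vertex subsets with path structure, counting each unordered path once). -/

import Mathlib

/-!
Fix a spanning tree `T` of `G`; exactly `k` edges of `G` lie outside `T`. A path is determined by
its ordered pair of endpoints together with the set of its edges outside `T`, which gives at most
`n (n - 1) * 2 ^ k = 2 * (2 ^ k * n.choose 2)` paths. Indeed, if two `u`–`v` paths use the same
edges outside `T`, the symmetric difference of their edge sets lies in `T`, and every vertex is
incident to an even number of its edges, since in each path the endpoints have odd degree and
all other vertices even degree. A nonempty subgraph of a forest has a leaf, so this symmetric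
difference is empty, and a path is determined by its edge set.
-/

open Finset
open scoped symmDiff

theorem Finset.even_card_symmDiff_iff {α : Type*} [DecidableEq α] (s t : Finset α) :
    Even #(s ∆ t) ↔ (Even #s ↔ Even #t) := by
  rw [symmDiff_def, sup_eq_union, card_union_of_disjoint disjoint_sdiff_sdiff,
    ← card_sdiff_add_card_inter s t, ← card_sdiff_add_card_inter t s, inter_comm t s]
  grind

namespace SimpleGraph

variable {V : Type*} {G : SimpleGraph V}

namespace Walk

variable {u v : V}

theorem IsPath.eq_of_edgeSet_eq {p q : G.Walk u v} (hp : p.IsPath) (hq : q.IsPath)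
    (h : p.edgeSet = q.edgeSet) : p = q := by
  induction p with
  | nil =>
    refine (edges_eq_nil.mp (List.eq_nil_iff_forall_not_mem.mpr fun e he => ?_)).eq_nil.symm
    rw [← mem_edgeSet, ← h, edgeSet_nil] at he
    exact he
  | @cons u c v hadj t ih =>
    cases q with
    | nil =>
      rw [edgeSet_cons, edgeSet_nil] at h
      exact absurd h (Set.insert_nonempty _ _).ne_empty
    | @cons _ x _ hadj' q' =>
      have hmem : s(u, c) ∈ (cons hadj' q').edgeSet := h ▸ by simp [edgeSet_cons]
      obtain rfl : c = x := by simpa using hq.eq_snd_of_mem_edges hmem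
      rw [cons_isPath_iff] at hp hq
      have tail_edgeSet {w : V} (r : G.Walk c w) (hr : u ∉ r.support) :
          r.edgeSet = (cons hadj r).edgeSet \ {s(u, c)} := by
        rw [edgeSet_cons, Set.insert_sdiff_self_of_notMem]
        exact fun he => hr (fst_mem_support_of_mem_edges r he)
      rw [ih hp.1 hq.1 (by rw [tail_edgeSet t hp.2, tail_edgeSet q' hq.2, h])]

variable [DecidableEq V]

theorem IsTrail.card_filter_edges_toFinset {p : G.Walk u v} (hp : p.IsTrail) (x : V) :
    #{e ∈ p.edges.toFinset | x ∈ e} = p.edges.countP (x ∈ ·) := by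
  rw [← List.toFinset_eq hp.edges_nodup]
  simp [Finset.filter, List.countP_eq_length_filter]

theorem IsTrail.even_card_filter_symmDiff {p q : G.Walk u v} (hp : p.IsTrail) (hq : q.IsTrail)
    (x : V) : Even #{e ∈ p.edges.toFinset ∆ q.edges.toFinset | x ∈ e} := by
  have hfilter : {e ∈ p.edges.toFinset ∆ q.edges.toFinset | x ∈ e} =
      {e ∈ p.edges.toFinset | x ∈ e} ∆ {e ∈ q.edges.toFinset | x ∈ e} := by
    ext e
    simp only [mem_filter, mem_symmDiff]
    tauto
  rw [hfilter, even_card_symmDiff_iff, hp.card_filter_edges_toFinset,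
    hq.card_filter_edges_toFinset, hp.even_countP_edges_iff, hq.even_countP_edges_iff]

end Walk

theorem IsAcyclic.exists_degree_eq_one [Fintype V] [DecidableRel G.Adj] (hG : G.IsAcyclic)
    (hne : G ≠ ⊥) : ∃ v, G.degree v = 1 := by
  obtain ⟨a, b, hab⟩ := ne_bot_iff_exists_adj.mp hne
  have : Nonempty V := ⟨a⟩
  obtain ⟨u, v, p, hp, hmax⟩ := Walk.exists_isPath_forall_isPath_length_le_length G
  have hnil : ¬p.Nil := by
    have := hmax _ _ _ (Path.singleton hab).2
    rw [← Walk.length_eq_zero_iff]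
    simp only [Path.singleton, Walk.length_cons, Walk.length_nil] at this
    omega
  -- the start of a longest path is a leaf: another neighbour would close a cycle or extend the path
  refine ⟨u, degree_eq_one_iff_existsUnique_adj.mpr ⟨_, p.adj_snd hnil, fun w hadj => ?_⟩⟩
  refine hG.eq_snd_of_adj_start hp hadj (by_contra fun hw => ?_)
  have := hmax _ _ _ (hp.cons (h := hadj.symm) hw)
  simp at this

theorem IsAcyclic.eq_bot_of_forall_even_degree [Fintype V] [DecidableRel G.Adj]
    (hG : G.IsAcyclic) (heven : ∀ v, Even (G.degree v)) : G = ⊥ := by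
  by_contra hne
  obtain ⟨v, hv⟩ := hG.exists_degree_eq_one hne
  simpa [hv] using heven v

theorem IsAcyclic.eq_empty_of_forall_even_card_filter_mem [Fintype V] [DecidableEq V]
    (hG : G.IsAcyclic) {D : Finset (Sym2 V)} (hD : ↑D ⊆ G.edgeSet)
    (heven : ∀ v, Even #{e ∈ D | v ∈ e}) : D = ∅ := by
  set H := fromEdgeSet (D : Set (Sym2 V))
  have hHD : H.edgeFinset = D := by
    ext e
    simpa [H] using fun he => G.not_isDiag_of_mem_edgeSet (hD he)
  have hH : H.IsAcyclic := hG.anti (by simpa [H] using Set.sdiff_subset.trans hD)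
  have hHbot : H = ⊥ := hH.eq_bot_of_forall_even_degree fun v => by
    rw [← card_incidenceFinset_eq_degree, incidenceFinset_eq_filter, hHD]
    exact heven v
  rw [← hHD, edgeFinset_eq_empty, hHbot]

theorem IsAcyclic.eq_of_isPath_of_edges_agree_off [Fintype V] [DecidableEq V]
    {T : SimpleGraph V} (hT : T.IsAcyclic) {u v : V} {p q : G.Walk u v} (hp : p.IsPath)
    (hq : q.IsPath) (h : ∀ e ∉ T.edgeSet, e ∈ p.edges ↔ e ∈ q.edges) : p = q := by
  set D := p.edges.toFinset ∆ q.edges.toFinset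
  have hD : ↑D ⊆ T.edgeSet := fun e (he : e ∈ D) => by_contra fun heT => by
    simp only [D, mem_symmDiff, List.mem_toFinset, h e heT] at he
    tauto
  have hDempty : D = ∅ := hT.eq_empty_of_forall_even_card_filter_mem hD
    (Walk.IsTrail.even_card_filter_symmDiff hp.isTrail hq.isTrail)
  refine hp.eq_of_edgeSet_eq hq (Set.ext fun e => ?_)
  simpa using congr(e ∈ $(symmDiff_eq_empty.mp hDempty))

theorem IsAcyclic.card_paths_ne_le [Fintype V] [DecidableEq V] [DecidableRel G.Adj]
    {T : SimpleGraph V} [DecidableRel T.Adj] (hT : T.IsAcyclic) :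
    Nat.card {x : (u : V) × (v : V) × G.Path u v // x.1 ≠ x.2.1} ≤
      #(univ : Finset V).offDiag * 2 ^ #(G.edgeFinset \ T.edgeFinset) := by
  let f : {x : (u : V) × (v : V) × G.Path u v // x.1 ≠ x.2.1} →
      (univ.offDiag ×ˢ (G.edgeFinset \ T.edgeFinset).powerset : Finset _) := fun x =>
    ⟨((x.1.1, x.1.2.1), x.1.2.2.1.edges.toFinset \ T.edgeFinset), by
      refine mem_product.mpr
        ⟨by simpa using x.2, mem_powerset.mpr (sdiff_subset_sdiff ?_ subset_rfl)⟩
      exact fun e he =>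
        mem_edgeFinset.mpr (x.1.2.2.1.edges_subset_edgeSet (List.mem_toFinset.mp he))⟩
  have hf : Function.Injective f := by
    rintro ⟨⟨u, v, p⟩, huv⟩ ⟨⟨u', v', q⟩, huv'⟩ hfpq
    simp only [ne_eq, Subtype.mk.injEq, Prod.mk.injEq, f] at hfpq
    obtain ⟨⟨rfl, rfl⟩, hE⟩ := hfpq
    have : p.1 = q.1 := hT.eq_of_isPath_of_edges_agree_off p.2 q.2 fun e he => by
      simpa [he] using congr(e ∈ $hE)
    rw [Subtype.ext this]
  calc _ ≤ Nat.card (univ.offDiag ×ˢ (G.edgeFinset \ T.edgeFinset).powerset : Finset _) :=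
        Nat.card_le_card_of_injective f hf
    _ = _ := by rw [Nat.card_eq_fintype_card, Fintype.card_coe, card_product, card_powerset]

end SimpleGraph

theorem path_count_le_of_feedback_edge_set_general {V : Type*} [Fintype V]
    (G : SimpleGraph V) [DecidableRel G.Adj] (n k : ℕ)
    (hconn : G.Connected) (hn : Fintype.card V = n)
    (hedges : G.edgeFinset.card = n - 1 + k) :
    Nat.card {x : (u : V) × (v : V) × G.Path u v // x.1 ≠ x.2.1} ≤
      2 * (2 ^ k * n.choose 2) := by
  classical
  obtain ⟨T, hTG, hT⟩ := hconn.exists_isTree_le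
  have hcotree : #(G.edgeFinset \ T.edgeFinset) = k := by
    have := hT.card_edgeFinset
    rw [card_sdiff_of_subset (SimpleGraph.edgeFinset_mono hTG)]
    omega
  have hpairs : #(univ : Finset V).offDiag = 2 * n.choose 2 := by
    rw [← Sym2.two_mul_card_image_offDiag, Sym2.card_image_offDiag, card_univ, hn]
  calc _ ≤ _ := hT.isAcyclic.card_paths_ne_le
    _ = _ := by rw [hpairs, hcotree]; ring

/-- A connected graph with `n` vertices and feedback edge set number `k`
(i.e., exactly `n - 1 + k` edges) contains at most `2 ^ k * n.choose 2` distinct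
(unordered) paths with at least one edge.  Since every such path corresponds to
exactly two directed paths (one for each orientation), this is stated as: the
number of directed paths with distinct endpoints is at most `2 * (2 ^ k * n.choose 2)`. -/
theorem path_count_le_of_feedback_edge_set {V : Type*} [Fintype V] [DecidableEq V]
    (G : SimpleGraph V) [DecidableRel G.Adj] (n k : ℕ)
    (hconn : G.Connected) (hn : Fintype.card V = n)
    (hedges : G.edgeFinset.card = n - 1 + k) :
    Nat.card {x : (u : V) × (v : V) × G.Path u v // x.1 ≠ x.2.1} ≤
      2 * (2 ^ k * n.choose 2) :=
  path_count_le_of_feedback_edge_set_general G n k hconn hn hedges
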